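/- Let S be an essentially epsilon-strongly G-graded ring with E_g a set of local units for S_g S_{g^{-1}}, let N be a normal subgroup of G, and fix a coset C ∈ G/N. Assume that for all g, h ∈ C, e ∈ E_g and f ∈ E_h, the join e ∨ f exists in the idempotent order. Then E_C, the join-closure of the union of the E_g for g ∈ C, is a set of local units for S_C S_{C^{-1}}. -/

import Mathlib

/-- The additive subgroup generated by all products `u * v` with `u ∈ U`, `v ∈ V`. -/
def mulSub {S : Type*} [NonUnitalRing S] (U V : AddSubgroup S) : AddSubgroup S :=
  AddSubgroup.closure (Set.image2 (· * ·) (U : Set S) (V : Set S))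

/-- `comp` is a `G`-grading of the ring `S`: the components form an internal direct sum
and `S_g S_h ⊆ S_{gh}`. -/
def IsGrading {G : Type*} [Group G] [DecidableEq G] {S : Type*} [NonUnitalRing S]
    (comp : G → AddSubgroup S) : Prop :=
  DirectSum.IsInternal comp ∧
    ∀ g h : G, ∀ a ∈ comp g, ∀ b ∈ comp h, a * b ∈ comp (g * h)

/-- The grading `comp` is epsilon-strong: for every `g` there are `ε_g ∈ S_g S_{g⁻¹}` and
`ε'_g ∈ S_{g⁻¹} S_g` with `ε_g s = s = s ε'_g` for all `s ∈ S_g`. -/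
def EpsilonStrong {G : Type*} [Group G] {S : Type*} [NonUnitalRing S]
    (comp : G → AddSubgroup S) : Prop :=
  ∀ g : G, ∃ ε ∈ mulSub (comp g) (comp g⁻¹), ∃ ε' ∈ mulSub (comp g⁻¹) (comp g),
    ∀ s ∈ comp g, ε * s = s ∧ s * ε' = s

/-- The component `S_C = ⊕_{g ∈ C} S_g` of the induced `G/N`-grading. -/
def indComp {G : Type*} [Group G] {S : Type*} [NonUnitalRing S]
    (comp : G → AddSubgroup S) (N : Subgroup G) (C : G ⧸ N) : AddSubgroup S :=
  ⨆ g : {g : G // (g : G ⧸ N) = C}, comp g.1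

/-- The closure of a set `A` under the join operation `a ∨ b = a + b - a*b`. -/
inductive JoinClosure {S : Type*} [NonUnitalRing S] (A : Set S) : S → Prop
  | base {x : S} : x ∈ A → JoinClosure A x
  | join {x y : S} : JoinClosure A x → JoinClosure A y → JoinClosure A (x + y - x * y)

/-- `E` is a set of local units for (the ring with underlying additive group) `T`:
a join-closed set of commuting idempotents contained in `T` such that every element of `T`
has a local unit in `E`. -/
def IsLocalUnitsFor {S : Type*} [NonUnitalRing S] (T : AddSubgroup S) (E : Set S) : Prop :=
  (∀ e ∈ E, e ∈ T) ∧ (∀ e ∈ E, e * e = e) ∧ (∀ e ∈ E, ∀ f ∈ E, e * f = f * e) ∧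
  (∀ e ∈ E, ∀ f ∈ E, e + f - e * f ∈ E) ∧
  (∀ r ∈ T, ∃ f ∈ E, f * r = r ∧ r * f = r)

/-! The symmetry `S_g = S_g S_{g⁻¹} S_g` makes the local units `E_g` of `S_g S_{g⁻¹}` left
units for `S_g`, and `S_{g⁻¹} = S_{g⁻¹} S_g S_{g⁻¹}` makes them right units for `S_{g⁻¹}`.
In a commuting join-closed set `E`, the elements having a left (right) unit in `E` form an
additive subgroup, because `e ∨ f` fixes whatever `e` or `f` fixes. Hence in `E_C` every
element of `S_C` has a left unit and every element of `S_{C⁻¹}` a right unit, so every element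
of `S_C S_{C⁻¹}` has a left unit `e` and a right unit `f`, and `e ∨ f` is a two-sided one.
Finally `E_C ⊆ S_C S_{C⁻¹}`, which is closed under multiplication as
`S_C S_{C⁻¹} S_C ⊆ S_{C C⁻¹ C} = S_C`. -/

section NonUnitalRing

variable {S : Type*} [NonUnitalRing S]

lemma mul_mem_mulSub {U V : AddSubgroup S} {u v : S} (hu : u ∈ U) (hv : v ∈ V) :
    u * v ∈ mulSub U V :=
  AddSubgroup.subset_closure ⟨u, hu, v, hv, rfl⟩

lemma mulSub_le {U V P : AddSubgroup S} (h : ∀ u ∈ U, ∀ v ∈ V, u * v ∈ P) :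
    mulSub U V ≤ P := by
  rw [mulSub, AddSubgroup.closure_le]
  rintro _ ⟨u, hu, v, hv, rfl⟩
  exact h u hu v hv

lemma mulSub_mono {U U' V V' : AddSubgroup S} (hU : U ≤ U') (hV : V ≤ V') :
    mulSub U V ≤ mulSub U' V' :=
  mulSub_le fun _ hu _ hv => mul_mem_mulSub (hU hu) (hV hv)

lemma mulSub_assoc (U V W : AddSubgroup S) :
    mulSub (mulSub U V) W = mulSub U (mulSub V W) := by
  apply le_antisymm
  · refine mulSub_le fun x hx w hw => ?_
    refine mulSub_le (P := (mulSub U (mulSub V W)).comap (AddMonoidHom.mulRight w))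
      (fun u hu v hv => ?_) hx
    change u * v * w ∈ mulSub U (mulSub V W)
    rw [mul_assoc]
    exact mul_mem_mulSub hu (mul_mem_mulSub hv hw)
  · refine mulSub_le fun u hu x hx => ?_
    refine mulSub_le (P := (mulSub (mulSub U V) W).comap (AddMonoidHom.mulLeft u))
      (fun v hv w hw => ?_) hx
    change u * (v * w) ∈ mulSub (mulSub U V) W
    rw [← mul_assoc]
    exact mul_mem_mulSub (mul_mem_mulSub hu hv) hw

lemma join_mul_of_mul_eq_self {e f r : S} (h : f * r = r) : (e + f - e * f) * r = r := by
  rw [sub_mul, add_mul, mul_assoc, h]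
  abel

lemma join_mul_of_mul_eq_self' {e f r : S} (hc : e * f = f * e) (h : e * r = r) :
    (e + f - e * f) * r = r := by
  rw [hc, add_comm e]
  exact join_mul_of_mul_eq_self h

lemma mul_join_of_mul_eq_self {e f r : S} (h : r * e = r) : r * (e + f - e * f) = r := by
  rw [mul_sub, mul_add, ← mul_assoc, h]
  abel

lemma mul_join_of_mul_eq_self' {e f r : S} (hc : e * f = f * e) (h : r * f = r) :
    r * (e + f - e * f) = r := by
  rw [hc, add_comm e]
  exact mul_join_of_mul_eq_self h

lemma Commute.join {x y z : S} (hy : Commute x y) (hz : Commute x z) :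
    Commute x (y + z - y * z) :=
  (hy.add_right hz).sub_right (hy.mul_right hz)

lemma join_mul_self {a b : S} (ha : a * a = a) (hb : b * b = b) (hc : a * b = b * a) :
    (a + b - a * b) * (a + b - a * b) = a + b - a * b := by
  have hab : (a * b) * (a * b) = a * b := by
    rw [mul_assoc, ← mul_assoc b, ← hc, mul_assoc, hb, ← mul_assoc, ha]
  have expand : (a + b - a * b) * (a + b - a * b)
      = a * a + a * b + b * a + b * b - a * a * b - b * a * b - a * (b * a) - a * (b * b)
        + (a * b) * (a * b) := by
    noncomm_ring
  rw [expand, hab, ha, hb, ← hc, mul_assoc, hb, ← mul_assoc, ha]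
  abel

lemma JoinClosure.commute {A : Set S} (hA : ∀ x ∈ A, ∀ y ∈ A, x * y = y * x) {x y : S}
    (hx : JoinClosure A x) (hy : JoinClosure A y) : Commute x y := by
  induction hx generalizing y with
  | base hx =>
    induction hy with
    | base hy => exact hA _ hx _ hy
    | join _ _ ihy ihz => exact ihy.join ihz
  | join _ _ iha ihb => exact ((iha hy).symm.join (ihb hy).symm).symm

lemma JoinClosure.mem {A : Set S} {P : AddSubgroup S} (hmul : ∀ x ∈ P, ∀ y ∈ P, x * y ∈ P)
    (hA : A ⊆ P) {x : S} (hx : JoinClosure A x) : x ∈ P := by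
  induction hx with
  | base h => exact hA h
  | join _ _ iha ihb => exact sub_mem (add_mem iha ihb) (hmul _ iha _ ihb)

structure IsCommJoinClosed (E : Set S) : Prop where
  nonempty : E.Nonempty
  comm : ∀ e ∈ E, ∀ f ∈ E, e * f = f * e
  join_mem : ∀ e ∈ E, ∀ f ∈ E, e + f - e * f ∈ E

lemma IsCommJoinClosed.joinClosure {A : Set S} (hne : A.Nonempty)
    (hA : ∀ x ∈ A, ∀ y ∈ A, x * y = y * x) : IsCommJoinClosed {x | JoinClosure A x} where
  nonempty := hne.mono fun _ => .base
  comm _ he _ hf := JoinClosure.commute hA he hf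
  join_mem _ he _ hf := .join he hf

lemma IsCommJoinClosed.joinClosure_biUnion {ι : Type*} {s : Set ι} {E : ι → Set S}
    (hs : s.Nonempty) (hne : ∀ i ∈ s, (E i).Nonempty)
    (hcomm : ∀ i ∈ s, ∀ j ∈ s, ∀ e ∈ E i, ∀ f ∈ E j, e * f = f * e) :
    IsCommJoinClosed {x | JoinClosure (⋃ i ∈ s, E i) x} := by
  refine .joinClosure ?_ ?_
  · obtain ⟨i, hi⟩ := hs
    exact (hne i hi).mono (Set.subset_biUnion_of_mem hi)
  · simp only [Set.mem_iUnion]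
    rintro x ⟨i, hi, hx⟩ y ⟨j, hj, hy⟩
    exact hcomm i hi j hj x hx y hy

lemma IsCommJoinClosed.mul_self_of_joinClosure {A : Set S}
    (hA : IsCommJoinClosed {x | JoinClosure A x}) (hid : ∀ x ∈ A, x * x = x) {x : S}
    (hx : JoinClosure A x) : x * x = x := by
  induction hx with
  | base h => exact hid _ h
  | join ha hb iha ihb => exact join_mul_self iha ihb (hA.comm _ ha _ hb)

lemma IsLocalUnitsFor.isCommJoinClosed {T : AddSubgroup S} {E : Set S}
    (hE : IsLocalUnitsFor T E) : IsCommJoinClosed E where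
  nonempty := let ⟨f, hf, _⟩ := hE.2.2.2.2 0 T.zero_mem; ⟨f, hf⟩
  comm := hE.2.2.1
  join_mem := hE.2.2.2.1

namespace IsCommJoinClosed

variable {E F : Set S}

def leftUnital (hE : IsCommJoinClosed E) : AddSubgroup S where
  carrier := {r | ∃ f ∈ E, f * r = r}
  zero_mem' := let ⟨f, hf⟩ := hE.nonempty; ⟨f, hf, mul_zero f⟩
  add_mem' := by
    rintro a b ⟨e, he, ha⟩ ⟨f, hf, hb⟩
    exact ⟨_, hE.join_mem e he f hf, by
      rw [mul_add, join_mul_of_mul_eq_self' (hE.comm e he f hf) ha, join_mul_of_mul_eq_self hb]⟩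
  neg_mem' := by
    rintro a ⟨f, hf, ha⟩
    exact ⟨f, hf, by rw [mul_neg, ha]⟩

def rightUnital (hE : IsCommJoinClosed E) : AddSubgroup S where
  carrier := {r | ∃ f ∈ E, r * f = r}
  zero_mem' := let ⟨f, hf⟩ := hE.nonempty; ⟨f, hf, zero_mul f⟩
  add_mem' := by
    rintro a b ⟨e, he, ha⟩ ⟨f, hf, hb⟩
    exact ⟨_, hE.join_mem e he f hf, by
      rw [add_mul, mul_join_of_mul_eq_self ha, mul_join_of_mul_eq_self' (hE.comm e he f hf) hb]⟩
  neg_mem' := by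
    rintro a ⟨f, hf, ha⟩
    exact ⟨f, hf, by rw [neg_mul, ha]⟩

lemma leftUnital_mono (hE : IsCommJoinClosed E) (hF : IsCommJoinClosed F) (h : E ⊆ F) :
    hE.leftUnital ≤ hF.leftUnital :=
  fun _ ⟨f, hf, hr⟩ => ⟨f, h hf, hr⟩

lemma rightUnital_mono (hE : IsCommJoinClosed E) (hF : IsCommJoinClosed F) (h : E ⊆ F) :
    hE.rightUnital ≤ hF.rightUnital :=
  fun _ ⟨f, hf, hr⟩ => ⟨f, h hf, hr⟩

lemma mulSub_le_leftUnital (hE : IsCommJoinClosed E) {U V : AddSubgroup S}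
    (hU : U ≤ hE.leftUnital) : mulSub U V ≤ hE.leftUnital :=
  mulSub_le fun u hu _ _ =>
    let ⟨f, hf, hfu⟩ := hU hu
    ⟨f, hf, by rw [← mul_assoc, hfu]⟩

lemma mulSub_le_rightUnital (hE : IsCommJoinClosed E) {U V : AddSubgroup S}
    (hV : V ≤ hE.rightUnital) : mulSub U V ≤ hE.rightUnital :=
  mulSub_le fun _ _ v hv =>
    let ⟨f, hf, hvf⟩ := hV hv
    ⟨f, hf, by rw [mul_assoc, hvf]⟩

lemma exists_unit_of_mem_leftUnital_of_mem_rightUnital (hE : IsCommJoinClosed E) {r : S}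
    (hl : r ∈ hE.leftUnital) (hr : r ∈ hE.rightUnital) : ∃ f ∈ E, f * r = r ∧ r * f = r := by
  obtain ⟨e, he, her⟩ := hl
  obtain ⟨f, hf, hrf⟩ := hr
  exact ⟨_, hE.join_mem e he f hf, join_mul_of_mul_eq_self' (hE.comm e he f hf) her,
    mul_join_of_mul_eq_self' (hE.comm e he f hf) hrf⟩

end IsCommJoinClosed

lemma IsLocalUnitsFor.le_leftUnital {U V : AddSubgroup S} {E : Set S}
    (hE : IsLocalUnitsFor (mulSub U V) E) (hsym : mulSub (mulSub U V) U = U) :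
    U ≤ hE.isCommJoinClosed.leftUnital :=
  calc U = mulSub (mulSub U V) U := hsym.symm
    _ ≤ _ := hE.isCommJoinClosed.mulSub_le_leftUnital fun r hr =>
      let ⟨f, hf, hfr, _⟩ := hE.2.2.2.2 r hr
      ⟨f, hf, hfr⟩

lemma IsLocalUnitsFor.le_rightUnital {U V : AddSubgroup S} {E : Set S}
    (hE : IsLocalUnitsFor (mulSub U V) E) (hsym : mulSub (mulSub V U) V = V) :
    V ≤ hE.isCommJoinClosed.rightUnital := by
  calc V = mulSub V (mulSub U V) := by rw [← mulSub_assoc, hsym]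
    _ ≤ _ := hE.isCommJoinClosed.mulSub_le_rightUnital fun r hr =>
      let ⟨f, hf, _, hrf⟩ := hE.2.2.2.2 r hr
      ⟨f, hf, hrf⟩

end NonUnitalRing

section InducedGrading

variable {G : Type*} [Group G] {S : Type*} [NonUnitalRing S] {comp : G → AddSubgroup S}
  {N : Subgroup G}

lemma le_indComp {C : G ⧸ N} {g : G} (hg : (g : G ⧸ N) = C) : comp g ≤ indComp comp N C :=
  le_iSup (fun p : {p : G // (p : G ⧸ N) = C} => comp p.1) ⟨g, hg⟩

lemma indComp_le {C : G ⧸ N} {P : AddSubgroup S} (h : ∀ g : G, (g : G ⧸ N) = C → comp g ≤ P) :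
    indComp comp N C ≤ P :=
  iSup_le fun g => h g.1 g.2

lemma indComp_inv_le [N.Normal] {C : G ⧸ N} {P : AddSubgroup S}
    (h : ∀ g : G, (g : G ⧸ N) = C → comp g⁻¹ ≤ P) : indComp comp N C⁻¹ ≤ P :=
  indComp_le fun k hk => by
    simpa using h k⁻¹ (by rw [QuotientGroup.mk_inv, hk, inv_inv])

variable (hmul : ∀ g h : G, ∀ a ∈ comp g, ∀ b ∈ comp h, a * b ∈ comp (g * h))
include hmul

lemma mulSub_indComp_le [N.Normal] (C D : G ⧸ N) :
    mulSub (indComp comp N C) (indComp comp N D) ≤ indComp comp N (C * D) := by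
  refine mulSub_le fun a ha b hb => ?_
  refine indComp_le (P := (indComp comp N (C * D)).comap (AddMonoidHom.mulLeft a))
    (fun h hh y hy => ?_) hb
  refine indComp_le (P := (indComp comp N (C * D)).comap (AddMonoidHom.mulRight y))
    (fun g hg x hx => ?_) ha
  exact le_indComp (by rw [QuotientGroup.mk_mul, hg, hh]) (hmul g h x hx y hy)

lemma mul_mem_mulSub_indComp [N.Normal] (C : G ⧸ N) {x y : S}
    (hx : x ∈ mulSub (indComp comp N C) (indComp comp N C⁻¹))
    (hy : y ∈ mulSub (indComp comp N C) (indComp comp N C⁻¹)) :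
    x * y ∈ mulSub (indComp comp N C) (indComp comp N C⁻¹) := by
  refine mulSub_le (P := (mulSub (indComp comp N C) (indComp comp N C⁻¹)).comap
    (AddMonoidHom.mulLeft x)) (fun u hu v hv => ?_) hy
  have hxu : x * u ∈ indComp comp N (C * C⁻¹ * C) :=
    mulSub_indComp_le hmul _ _ (mul_mem_mulSub (mulSub_indComp_le hmul _ _ hx) hu)
  rw [mul_inv_cancel, one_mul] at hxu
  change x * (u * v) ∈ mulSub (indComp comp N C) (indComp comp N C⁻¹)
  rw [← mul_assoc]
  exact mul_mem_mulSub hxu hv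

end InducedGrading
/-- Let `S` be essentially epsilon-strongly `G`-graded with `E_g` a set of local units for
`S_g S_{g⁻¹}`, let `N ◃ G` and fix a coset `C`. If for all `g, h ∈ C` the elements of `E_g`
and `E_h` commute (so that all joins `e ∨ f = e + f - ef` exist in the idempotent order),
then the join-closure `E_C` of `⋃_{g ∈ C} E_g` is a set of local units for `S_C S_{C⁻¹}`. -/
theorem stmt13 {G : Type*} [Group G] [DecidableEq G] {S : Type*} [NonUnitalRing S]
    (comp : G → AddSubgroup S) (hgr : IsGrading comp)
    (hsym : ∀ g : G, mulSub (mulSub (comp g) (comp g⁻¹)) (comp g) = comp g)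
    (E : G → Set S)
    (hE : ∀ g : G, IsLocalUnitsFor (mulSub (comp g) (comp g⁻¹)) (E g))
    (N : Subgroup G) [N.Normal] (C : G ⧸ N)
    (hjoin : ∀ g h : G, (g : G ⧸ N) = C → (h : G ⧸ N) = C →
      ∀ e ∈ E g, ∀ f ∈ E h, e * f = f * e) :
    IsLocalUnitsFor (mulSub (indComp comp N C) (indComp comp N C⁻¹))
      {x | JoinClosure (⋃ g ∈ {g : G | (g : G ⧸ N) = C}, E g) x} := by
  set A := ⋃ g ∈ {g : G | (g : G ⧸ N) = C}, E g
  have hA : ∀ x ∈ A, ∃ g : G, (g : G ⧸ N) = C ∧ x ∈ E g := by simp [A]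
  have hEC : IsCommJoinClosed {x | JoinClosure A x} :=
    .joinClosure_biUnion (QuotientGroup.mk_surjective C)
      (fun g _ => (hE g).isCommJoinClosed.nonempty) fun g hg h hh => hjoin g h hg hh
  have hEsub : ∀ g : G, (g : G ⧸ N) = C → E g ⊆ {x | JoinClosure A x} :=
    fun g hg _ he => .base (Set.mem_biUnion hg he)
  have hleft : indComp comp N C ≤ hEC.leftUnital := indComp_le fun g hg =>
    ((hE g).le_leftUnital (hsym g)).trans
      ((hE g).isCommJoinClosed.leftUnital_mono hEC (hEsub g hg))
  have hright : indComp comp N C⁻¹ ≤ hEC.rightUnital := indComp_inv_le fun g hg =>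
    ((hE g).le_rightUnital (by simpa using hsym g⁻¹)).trans
      ((hE g).isCommJoinClosed.rightUnital_mono hEC (hEsub g hg))
  refine ⟨fun e he => JoinClosure.mem (fun _ hx _ hy => mul_mem_mulSub_indComp hgr.2 C hx hy)
      (fun x hx => ?_) he,
    fun e he => hEC.mul_self_of_joinClosure (fun x hx => ?_) he, hEC.comm, hEC.join_mem,
    fun r hr => hEC.exists_unit_of_mem_leftUnital_of_mem_rightUnital
      (hEC.mulSub_le_leftUnital hleft hr) (hEC.mulSub_le_rightUnital hright hr)⟩
  · obtain ⟨g, hg, hxg⟩ := hA x hx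
    exact mulSub_mono (le_indComp hg) (le_indComp (by rw [QuotientGroup.mk_inv, hg]))
      ((hE g).1 x hxg)
  · obtain ⟨g, hg, hxg⟩ := hA x hx
    exact (hE g).2.1 x hxg
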